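/- arXiv:2309.14558 — 2 statements merged into one kernel-verified Lean document; each statement's English description precedes it below -/
import Mathlib

section
/- Let f be a submodular function on subsets of a finite set U, let A_1,...,A_m be pairwise disjoint subsets of U, and let B ⊆ U. Then there exists i ∈ {1,...,m} such that f(A_i ∪ B) ≥ (1 - 1/m) f(B), assuming f is nonnegative. -/
/-!
Put `C i = A i \ B`. Submodularity bounds the gain of adding the disjoint union of the `C i` to `B`
by the sum of the individual gains `f (A i ∪ B) - f B`, and nonnegativity bounds that total gain
below by `-f B`. Hence `∑ i, f (A i ∪ B) ≥ (m - 1) f B`, and some term is at least the average.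
-/

open Finset

section Submodular

variable {U : Type*} [DecidableEq U] {f : Finset U → ℝ}

theorem sub_le_sub_union_of_subset
    (hsub : ∀ A B : Finset U, A ⊆ B → ∀ x ∉ B, f (insert x B) - f B ≤ f (insert x A) - f A)
    {X Y : Finset U} (hXY : X ⊆ Y) (D : Finset U) (hD : Disjoint D Y) :
    f (D ∪ Y) - f Y ≤ f (D ∪ X) - f X := by
  induction D using Finset.induction_on with
  | empty => simp
  | @insert x D hxD ih =>
    rw [disjoint_insert_left] at hD
    have hx : x ∉ D ∪ Y := by simp [hxD, hD.1]
    have hstep := hsub (D ∪ X) (D ∪ Y) (union_subset_union_right hXY) x hx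
    rw [insert_union, insert_union]
    linarith [ih hD.2]

theorem sub_le_sum_sub_of_pairwiseDisjoint
    (hsub : ∀ A B : Finset U, A ⊆ B → ∀ x ∉ B, f (insert x B) - f B ≤ f (insert x A) - f A)
    {ι : Type*} [DecidableEq ι] (s : Finset ι) (C : ι → Finset U)
    (hC : (s : Set ι).PairwiseDisjoint C) (B : Finset U) :
    f (s.biUnion C ∪ B) - f B ≤ ∑ i ∈ s, (f (C i ∪ B) - f B) := by
  induction s using Finset.induction_on with
  | empty => simp
  | @insert j s hjs ih =>
    rw [coe_insert] at hC
    -- only `C j \ B` is new, and it is disjoint from everything already added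
    have hdisj : Disjoint (C j \ B) (s.biUnion C ∪ B) := by
      refine disjoint_union_right.2 ⟨?_, sdiff_disjoint⟩
      refine disjoint_biUnion_right _ _ _ |>.2 fun i hi => ?_
      exact (hC (Set.mem_insert j _) (Set.mem_insert_of_mem j hi)
        (ne_of_mem_of_not_mem hi hjs).symm).mono_left sdiff_subset
    have hstep := sub_le_sub_union_of_subset hsub subset_union_right (C j \ B) hdisj
    have hCY : C j \ B ∪ (s.biUnion C ∪ B) = C j ∪ (s.biUnion C ∪ B) := by
      rw [← union_assoc, union_right_comm, sdiff_union_self_eq_union, union_right_comm,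
        union_assoc]
    rw [hCY, sdiff_union_self_eq_union] at hstep
    rw [biUnion_insert, union_assoc, sum_insert hjs]
    linarith [ih (hC.subset (Set.subset_insert j _))]

end Submodular

theorem stmt_0 {U : Type*} [DecidableEq U] (f : Finset U → ℝ)
    (hsub : ∀ A B : Finset U, A ⊆ B → ∀ x ∉ B,
      f (insert x B) - f B ≤ f (insert x A) - f A)
    (hnn : ∀ X : Finset U, 0 ≤ f X)
    (m : ℕ) (hm : 1 ≤ m) (A : Fin m → Finset U)
    (hdisj : ∀ i j : Fin m, i ≠ j → Disjoint (A i) (A j))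
    (B : Finset U) :
    ∃ i : Fin m, (1 - 1 / (m : ℝ)) * f B ≤ f (A i ∪ B) := by
  have hgain := sub_le_sum_sub_of_pairwiseDisjoint hsub univ A
    (fun i _ j _ hij => hdisj i j hij) B
  have hsum : ∑ _i : Fin m, (1 - 1 / (m : ℝ)) * f B ≤ ∑ i, f (A i ∪ B) := by
    have hm' : (m : ℝ) ≠ 0 := by positivity
    rw [sum_sub_distrib, sum_const, card_univ, Fintype.card_fin, nsmul_eq_mul] at hgain
    rw [sum_const, card_univ, Fintype.card_fin, nsmul_eq_mul, ← mul_assoc, mul_sub, mul_one,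
      mul_one_div_cancel hm']
    linarith [hnn (univ.biUnion A ∪ B)]
  obtain ⟨i, -, hi⟩ := exists_le_of_sum_le (univ_nonempty_iff.2 ⟨⟨0, hm⟩⟩) hsum
  exact ⟨i, hi⟩
end

section
/- Let f : 2^U → ℝ≥0 be submodular (not necessarily monotone), τ > 0, ε ∈ (0,1), g ≥ 1, and suppose OPT ⊆ U satisfies f(OPT) ≥ τ and |OPT| ≤ g. Let S_1,...,S_m with m = ⌈2/ε⌉ be disjoint subsets of U such that every element o ∈ OPT \ (∪_i S_i) satisfies f(S_t ∪ {o}) − f(S_t) < ετ/(2g) for every t (at the time considered, i.e., by submodularity also f(S_t ∪ OPT_1 ∪ {o}) − f(S_t ∪ OPT_1) < ετ/(2g) where OPT_1 = OPT ∩ (∪_i S_i)). Assume additionally |S_t| < 2g/ε for all t. Then there exists t such that f(S_t ∪ OPT_1) ≥ (1 − ε)τ. -/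
/-!
For pairwise disjoint `S₁, …, Sₘ`, submodularity makes the marginal gain of `⋃ Sᵢ` over `OPT`
at most the sum of the gains of the `Sᵢ`, and nonnegativity bounds that gain below by `-f(OPT)`;
so some `t` has `f(OPT ∪ Sₜ) ≥ (1 - 1/m) f(OPT) ≥ (1 - ε/2) τ`. Removing from `OPT ∪ Sₜ` the
elements of `OPT` outside `⋃ Sᵢ` loses, again by submodularity, less than `ετ/(2g)` for each of
at most `g` elements, hence at most `ετ/2`.
-/

def IsSubmodular {U : Type*} [DecidableEq U] (f : Finset U → ℝ) : Prop :=
  ∀ A B : Finset U, A ⊆ B → ∀ x ∉ B, f (insert x B) - f B ≤ f (insert x A) - f A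

namespace IsSubmodular

variable {U : Type*} [DecidableEq U] {f : Finset U → ℝ}

theorem union_sub_le (hf : IsSubmodular f) {A B : Finset U} (hAB : A ⊆ B) {C : Finset U}
    (hCB : Disjoint C B) : f (B ∪ C) - f B ≤ f (A ∪ C) - f A := by
  induction C using Finset.induction_on with
  | empty => simp
  | @insert x C hxC ih =>
    rw [Finset.disjoint_insert_left] at hCB
    have hx : x ∉ B ∪ C := by simp [hCB.1, hxC]
    have step := hf (A ∪ C) (B ∪ C) (Finset.union_subset_union_left hAB) x hx
    rw [Finset.union_insert, Finset.union_insert]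
    linarith [ih hCB.2]

theorem union_sub_le_sum (hf : IsSubmodular f) {A C : Finset U} (hCA : Disjoint C A) :
    f (A ∪ C) - f A ≤ ∑ x ∈ C, (f (insert x A) - f A) := by
  induction C using Finset.induction_on with
  | empty => simp
  | @insert x C hxC ih =>
    rw [Finset.disjoint_insert_left] at hCA
    have hx : x ∉ A ∪ C := by simp [hCA.1, hxC]
    have step := hf A (A ∪ C) Finset.subset_union_left x hx
    rw [Finset.union_insert, Finset.sum_insert hxC]
    linarith [ih hCA.2]

theorem le_add_card_mul (hf : IsSubmodular f) {A C : Finset U} (hCA : Disjoint C A) {δ : ℝ}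
    (hδ : ∀ x ∈ C, f (insert x A) - f A ≤ δ) : f (A ∪ C) ≤ f A + C.card * δ := by
  have := (hf.union_sub_le_sum hCA).trans (Finset.sum_le_card_nsmul C _ δ hδ)
  rw [nsmul_eq_mul] at this
  linarith

theorem biUnion_sub_le_sum (hf : IsSubmodular f) (B : Finset U) {ι : Type*} [DecidableEq ι]
    (S : ι → Finset U) {s : Finset ι} (hS : (s : Set ι).PairwiseDisjoint S) :
    f (B ∪ s.biUnion S) - f B ≤ ∑ i ∈ s, (f (B ∪ S i) - f B) := by
  induction s using Finset.induction_on with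
  | empty => simp
  | @insert j s hj ih =>
    rw [Finset.coe_insert, Set.pairwiseDisjoint_insert_of_notMem hj] at hS
    have hdisj : Disjoint (S j \ B) (B ∪ s.biUnion S) := by
      refine Finset.disjoint_union_right.2 ⟨Finset.sdiff_disjoint, ?_⟩
      refine (Finset.disjoint_biUnion_right _ _ _).2 fun i hi => ?_
      exact (hS.2 i hi).mono_left Finset.sdiff_subset
    have step := hf.union_sub_le (Finset.subset_union_left (s₂ := s.biUnion S)) hdisj
    rw [Finset.union_sdiff_self_eq_union,
      show B ∪ s.biUnion S ∪ S j \ B = B ∪ (S j ∪ s.biUnion S) by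
        ext; simp only [Finset.mem_union, Finset.mem_sdiff]; tauto] at step
    rw [Finset.biUnion_insert, Finset.sum_insert hj]
    linarith [ih hS.1]

theorem le_union_inter_add_card_mul (hf : IsSubmodular f) {S T O : Finset U} (hST : S ⊆ T)
    {δ : ℝ} (hδ : ∀ o ∈ O, o ∉ T → f (insert o S) - f S ≤ δ) :
    f (O ∪ S) ≤ f (S ∪ (O ∩ T)) + (O \ T).card * δ := by
  have hdisj : Disjoint (O \ T) (S ∪ (O ∩ T)) :=
    Finset.disjoint_union_right.2 ⟨Finset.disjoint_of_subset_right hST Finset.sdiff_disjoint,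
      Finset.disjoint_of_subset_right Finset.inter_subset_right Finset.sdiff_disjoint⟩
  have hunion : S ∪ (O ∩ T) ∪ O \ T = O ∪ S := by
    ext x; simp only [Finset.mem_union, Finset.mem_inter, Finset.mem_sdiff]; tauto
  rw [← hunion]
  refine hf.le_add_card_mul hdisj fun o ho => ?_
  have hoS := Finset.disjoint_left.1 hdisj ho
  rw [Finset.mem_sdiff] at ho
  linarith [hf _ _ Finset.subset_union_left o hoS, hδ o ho.1 ho.2]

open Function in
theorem exists_le_union_of_pairwise_disjoint (hf : IsSubmodular f) (hnn : ∀ X, 0 ≤ f X)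
    (B : Finset U) {ι : Type*} [Fintype ι] [Nonempty ι] (S : ι → Finset U)
    (hS : Pairwise (Disjoint on S)) :
    ∃ i, (1 - 1 / Fintype.card ι) * f B ≤ f (B ∪ S i) := by
  classical
  have hsum : -f B ≤ ∑ i, (f (B ∪ S i) - f B) := by
    have := hf.biUnion_sub_le_sum B S (s := Finset.univ) fun i _ j _ hij => hS hij
    linarith [hnn (B ∪ Finset.univ.biUnion S)]
  have hcard : (0 : ℝ) < Fintype.card ι := by exact_mod_cast Fintype.card_pos
  obtain ⟨i, -, hi⟩ := Finset.exists_le_of_sum_le (f := fun _ => -f B / Fintype.card ι)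
    (g := fun i => f (B ∪ S i) - f B) Finset.univ_nonempty
    (by simpa [Finset.sum_const, Finset.card_univ, mul_div_cancel₀ _ hcard.ne'] using hsum)
  rw [neg_div] at hi
  exact ⟨i, by rw [sub_mul, one_mul, one_div_mul_eq_div]; linarith⟩

end IsSubmodular

theorem one_div_natCeil_two_div_le {ε : ℝ} (hε : 0 < ε) : 1 / (⌈2 / ε⌉₊ : ℝ) ≤ ε / 2 := by
  rw [one_div_le (by positivity) (by positivity)]
  exact (le_of_eq (by field_simp)).trans (Nat.le_ceil _)

theorem stmt_12_general {U : Type*} [DecidableEq U] (f : Finset U → ℝ)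
    (hnn : ∀ X : Finset U, 0 ≤ f X)
    (hsub : ∀ A B : Finset U, A ⊆ B → ∀ x ∉ B,
      f (insert x B) - f B ≤ f (insert x A) - f A)
    (τ ε g : ℝ) (hτ : 0 < τ) (hε : ε ∈ Set.Ioo (0 : ℝ) 1) (hg : 1 ≤ g)
    (OPT : Finset U) (hOPT : τ ≤ f OPT) (hOPTcard : (OPT.card : ℝ) ≤ g)
    (m : ℕ) (hm : m = ⌈(2 : ℝ) / ε⌉₊)
    (S : Fin m → Finset U)
    (hdisj : ∀ i j : Fin m, i ≠ j → Disjoint (S i) (S j))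
    (hthresh : ∀ o ∈ OPT, o ∉ Finset.univ.biUnion S → ∀ t : Fin m,
      f (insert o (S t)) - f (S t) < ε * τ / (2 * g)) :
    ∃ t : Fin m, (1 - ε) * τ ≤ f (S t ∪ (OPT ∩ Finset.univ.biUnion S)) := by
  obtain ⟨hε0, hε1⟩ := hε
  have hf : IsSubmodular f := hsub
  have : NeZero m := ⟨hm ▸ (Nat.ceil_pos.2 (by positivity)).ne'⟩
  obtain ⟨t, ht⟩ := hf.exists_le_union_of_pairwise_disjoint hnn OPT S hdisj
  rw [Fintype.card_fin] at ht
  have hloss := hf.le_union_inter_add_card_mul (Finset.subset_biUnion_of_mem S (Finset.mem_univ t))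
    fun o ho hoT => (hthresh o ho hoT t).le
  have hcard : ((OPT \ Finset.univ.biUnion S).card : ℝ) ≤ g :=
    le_trans (by exact_mod_cast Finset.card_le_card Finset.sdiff_subset) hOPTcard
  have hloss_le : ((OPT \ Finset.univ.biUnion S).card : ℝ) * (ε * τ / (2 * g)) ≤ ε * τ / 2 :=
    calc _ ≤ g * (ε * τ / (2 * g)) := by gcongr
      _ = ε * τ / 2 := by field_simp
  have hinv : 1 / (m : ℝ) ≤ ε / 2 := hm ▸ one_div_natCeil_two_div_le hε0
  refine ⟨t, ?_⟩
  calc (1 - ε) * τ = (1 - ε / 2) * τ - ε * τ / 2 := by ring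
    _ ≤ (1 - 1 / m) * f OPT - ε * τ / 2 := by gcongr; linarith
    _ ≤ _ := by linarith

theorem stmt_12 {U : Type*} [DecidableEq U] (f : Finset U → ℝ)
    (hnn : ∀ X : Finset U, 0 ≤ f X)
    (hsub : ∀ A B : Finset U, A ⊆ B → ∀ x ∉ B,
      f (insert x B) - f B ≤ f (insert x A) - f A)
    (τ ε g : ℝ) (hτ : 0 < τ) (hε : ε ∈ Set.Ioo (0 : ℝ) 1) (hg : 1 ≤ g)
    (OPT : Finset U) (hOPT : τ ≤ f OPT) (hOPTcard : (OPT.card : ℝ) ≤ g)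
    (m : ℕ) (hm : m = ⌈(2 : ℝ) / ε⌉₊)
    (S : Fin m → Finset U)
    (hdisj : ∀ i j : Fin m, i ≠ j → Disjoint (S i) (S j))
    (hsize : ∀ t : Fin m, (S t).card < 2 * g / ε)
    (hthresh : ∀ o ∈ OPT, o ∉ Finset.univ.biUnion S → ∀ t : Fin m,
      f (insert o (S t)) - f (S t) < ε * τ / (2 * g)) :
    ∃ t : Fin m, (1 - ε) * τ ≤ f (S t ∪ (OPT ∩ Finset.univ.biUnion S)) :=
  stmt_12_general f hnn hsub τ ε g hτ hε hg OPT hOPT hOPTcard m hm S hdisj hthresh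
end
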